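/- arXiv:1407.4324 — 2 statements merged into one kernel-verified Lean document; each statement's English description precedes it below -/
import Mathlib

section
/- Let τ = (m^{n−m+1}, (m−1)^2, (m−2)^2, …, 1^2) be the Young diagram with one part equal to m repeated n−m+1 times and each of m−1, m−2, …, 1 repeated twice, where m ≤ n. Then for every t ∈ {1,…,m}, γ_t(τ) = (n−t+1)(m−t+1). -/
/-- `γ_t(σ) = Σ_i max{0, σ_i − t + 1}` for a diagram `σ` (as truncated subtraction). -/
def gammaFn (σ : List ℕ) (t : ℕ) : ℕ := (σ.map (fun a => a + 1 - t)).sum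

/-- The diagram `(m^(n−m+1), (m−1)², …, 1²)`. -/
def tauGeneric (m n : ℕ) : List ℕ :=
  List.replicate (n - m + 1) m ++
    (List.range (m - 1)).reverse.flatMap (fun j => [j + 1, j + 1])

lemma tailSum (m t : ℕ) (ht : 1 ≤ t) (htm : t ≤ m) :
    (((List.range (m - 1)).reverse.flatMap (fun j => [j + 1, j + 1])).map
      (fun a => a + 1 - t)).sum = (m - t) * (m - t + 1) := by
  induction m, htm using Nat.le_induction with
  | base =>
    simp only [Nat.sub_self, Nat.zero_mul]
    apply List.sum_eq_zero
    intro x hx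
    simp only [List.mem_map, List.mem_flatMap, List.mem_reverse, List.mem_range] at hx
    obtain ⟨a, ⟨j, hj, ha⟩, rfl⟩ := hx
    simp only [List.mem_cons, List.mem_singleton] at ha
    rcases ha with rfl | rfl | h
    · omega
    · omega
    · simp at h
  | succ m hm ih =>
    obtain ⟨k, rfl⟩ : ∃ k, m = k + 1 := ⟨m - 1, by omega⟩
    have h1 : k + 1 + 1 - 1 = k + 1 := rfl
    rw [h1, List.range_succ, List.reverse_append]
    simp only [List.reverse_singleton, List.singleton_append, List.flatMap_cons,
      List.map_append, List.sum_append]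
    have h2 : k + 1 - 1 = k := rfl
    rw [h2] at ih
    rw [ih]
    have hu : k + 1 + 1 - t = (k + 1 - t) + 1 := by omega
    simp only [List.map_cons, List.map_nil, List.sum_cons, List.sum_nil]
    rw [hu]
    generalize k + 1 - t = u
    ring

/-- For `τ = (m^(n−m+1), (m−1)², …, 1²)` with `m ≤ n`, and `1 ≤ t ≤ m`,
`γ_t(τ) = (n−t+1)(m−t+1)`. -/
theorem statement10 (m n t : ℕ) (hm : 1 ≤ m) (hmn : m ≤ n) (ht : 1 ≤ t) (htm : t ≤ m) :
    gammaFn (tauGeneric m n) t = (n - t + 1) * (m - t + 1) := by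
  unfold gammaFn tauGeneric
  rw [List.map_append, List.sum_append, tailSum m t ht htm, List.map_replicate,
    List.sum_replicate, smul_eq_mul]
  have h1 : m + 1 - t = (m - t) + 1 := by omega
  have h2 : n - t + 1 = (n - m + 1) + (m - t) := by omega
  rw [h1, h2]
  ring
end

section
/- Let n be odd and τ = (((n−1)/2)^3, ((n−1)/2 − 1)^4, …, 2^4, 1^4). Then for every t ∈ {1,…,(n−1)/2}, γ_t(τ) = ((n−1)/2 − t + 1)(n − 2t + 2), which equals (n/2 − t + 1)(n − 2t + 1) as rational numbers. -/
/-- For odd `n`, the diagram `(((n−1)/2)³, ((n−1)/2 − 1)⁴, …, 2⁴, 1⁴)`. -/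
def tauPfOdd (n : ℕ) : List ℕ :=
  List.replicate 3 ((n - 1) / 2) ++
    (List.range ((n - 1) / 2 - 1)).reverse.flatMap (fun j => List.replicate 4 (j + 1))

lemma aux_sum (t d : ℕ) (ht : 1 ≤ t) :
    2 * ∑ j ∈ Finset.range (t + d - 1), (j + 2 - t) = d * (d + 1) := by
  induction d with
  | zero =>
    have h : ∀ j ∈ Finset.range (t - 1), j + 2 - t = 0 := by
      intro j hj
      simp only [Finset.mem_range] at hj
      omega
    have h0 : t + 0 - 1 = t - 1 := by omega
    rw [h0, Finset.sum_congr rfl h]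
    simp
  | succ d ih =>
    have h : t + (d + 1) - 1 = (t + d - 1) + 1 := by omega
    rw [h, Finset.sum_range_succ]
    have h2 : (t + d - 1) + 2 - t = d + 1 := by omega
    rw [h2, Nat.mul_add, ih]
    ring

lemma flat_sum (r t : ℕ) :
    (((List.range r).reverse.flatMap (fun j => List.replicate 4 (j + 1))).map
      (fun a => a + 1 - t)).sum = ∑ j ∈ Finset.range r, 4 * (j + 2 - t) := by
  induction r with
  | zero => simp
  | succ r ih =>
    rw [List.range_succ, List.reverse_append]
    simp only [List.reverse_singleton, List.singleton_append, List.flatMap_cons,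
      List.map_append, List.sum_append, Finset.sum_range_succ]
    rw [ih]
    simp [List.map_replicate, List.sum_replicate, add_comm]
    ring_nf

/-- For odd `n` and `1 ≤ t ≤ (n−1)/2`,
`γ_t(τ) = ((n−1)/2 − t + 1)(n − 2t + 2)`, which equals `(n/2 − t + 1)(n − 2t + 1)`
as rational numbers. -/
theorem statement12 (n t : ℕ) (hodd : Odd n) (ht : 1 ≤ t) (htn : t ≤ (n - 1) / 2) :
    gammaFn (tauPfOdd n) t = ((n - 1) / 2 - t + 1) * (n - 2 * t + 2) ∧
    (gammaFn (tauPfOdd n) t : ℚ) =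
      ((n : ℚ) / 2 - t + 1) * ((n : ℚ) - 2 * t + 1) := by
  obtain ⟨m, hm⟩ := hodd
  set d := (n - 1) / 2 - t with hd
  have hmt : (n - 1) / 2 = t + d := by omega
  have hgamma : gammaFn (tauPfOdd n) t = (d + 1) * (2 * d + 3) := by
    unfold gammaFn tauPfOdd
    rw [List.map_append, List.sum_append, flat_sum]
    rw [List.map_replicate, List.sum_replicate]
    have h1 : (n - 1) / 2 + 1 - t = d + 1 := by omega
    have h2 : (n - 1) / 2 - 1 = t + d - 1 := by omega
    rw [h1, h2, ← Finset.mul_sum]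
    have h3 : 4 * ∑ j ∈ Finset.range (t + d - 1), (j + 2 - t)
        = 2 * (d * (d + 1)) := by
      rw [← aux_sum t d ht]; ring
    rw [h3, smul_eq_mul]
    ring
  constructor
  · rw [hgamma]
    have h4 : (n - 1) / 2 - t + 1 = d + 1 := by omega
    have h5 : n - 2 * t + 2 = 2 * d + 3 := by omega
    rw [h4, h5]
  · rw [hgamma]
    have hn : (n : ℚ) = 2 * t + 2 * d + 1 := by
      have : n = 2 * t + 2 * d + 1 := by omega
      exact_mod_cast congrArg (Nat.cast (R := ℚ)) this
    rw [hn]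
    push_cast
    ring
end
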